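/- arXiv:2101.07991 — 2 statements merged into one kernel-verified Lean document; each statement's English description precedes it below -/
import Mathlib

section
/- A subset S ⊆ C_s(G,X) satisfies the compactness axiom if and only if the following holds: whenever (g_n, x_n) → (g, x) in G × X and there exists a sequence of maps φ_n ∈ S with g_n ∈ dom φ_n and φ_n(g_n) = x_n, there exist a map ψ ∈ S with g ∈ dom ψ and ψ(g) = x, and a subsequence {(g_{n_i}, φ_{n_i})} such that (g_{n_i}, φ_{n_i}) → (g, ψ) in G × C_s(G,X). -/
open Set Filter Topology TopologicalSpace

namespace Yorke

/-- The space `X̂ = X ∪ {ω}`, encoded as `Option X` with `ω = none`.  Its open sets are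
`X̂` itself together with the open sets of `X`. -/
instance hatTopology (X : Type*) [TopologicalSpace X] : TopologicalSpace (Option X) :=
  TopologicalSpace.generateFrom
    ({Set.univ} ∪ {s : Set (Option X) | ∃ u : Set X, IsOpen u ∧ s = (Option.some : X → Option X) '' u})

/-- The space `C_p(G,X)` of partial maps from `G` to `X` (continuous maps defined on a
nonempty open subset of `G`), encoded via the bijection `μ` with the subspace
`{f : C(G,X̂) | f⁻¹(X) ≠ ∅}` of `C(G,X̂)`; it carries the compact-open topology. -/
abbrev Cp (G X : Type*) [TopologicalSpace G] [TopologicalSpace X] : Type _ :=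
  {f : C(G, Option X) // {g : G | f g ≠ none}.Nonempty}

variable {G X : Type*} [TopologicalSpace G] [TopologicalSpace X]

/-- The domain of a partial map. -/
def dom (φ : Cp G X) : Set G := {g : G | φ.1 g ≠ none}

/-- A partial map with nonempty connected domain is maximally defined if every partial map
with nonempty connected domain which extends it is equal to it. -/
def MaximallyDefined (φ : Cp G X) : Prop :=
  IsConnected (dom φ) ∧
    ∀ ψ : Cp G X, IsConnected (dom ψ) → dom φ ⊆ dom ψ →
      (∀ g ∈ dom φ, φ.1 g = ψ.1 g) → φ = ψ

/-- The space `C_s(G,X)` of maximally defined partial maps, with the subspace topology. -/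
abbrev Cs (G X : Type*) [TopologicalSpace G] [TopologicalSpace X] : Type _ :=
  {φ : Cp G X // MaximallyDefined φ}

/-- The orbit `O(φ) = {φ(g) : g ∈ dom φ}`. -/
def orbit (φ : Cs G X) : Set X := {x : X | ∃ g : G, φ.1.1 g = some x}

/-- The star-construction `S*W = {(g,φ) : φ ∈ S, g ∈ dom φ, (g,φ(g)) ∈ W}`. -/
def star (S : Set (Cs G X)) (W : Set (G × X)) : Set (G × Cs G X) :=
  {p : G × Cs G X | p.2 ∈ S ∧ ∃ x : X, p.2.1.1 p.1 = some x ∧ (p.1, x) ∈ W}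

/-- `S` satisfies the compactness axiom if `S*W` is compact for every compact `W`. -/
def CompactnessAxiom (S : Set (Cs G X)) : Prop :=
  ∀ W : Set (G × X), IsCompact W → IsCompact (star S W)

/-- `S` satisfies the existence axiom on `W` if `S*{(t,x)}` is nonempty for all `(t,x) ∈ W`. -/
def ExistenceAxiom (S : Set (Cs G X)) (W : Set (G × X)) : Prop :=
  ∀ p ∈ W, (star S {p}).Nonempty

/-- `S` satisfies the uniqueness axiom on `W` if `S*{(t,x)}` is empty or a singleton. -/
def UniquenessAxiom (S : Set (Cs G X)) (W : Set (G × X)) : Prop :=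
  ∀ p ∈ W, (star S {p}).Subsingleton

section GroupPart

variable {G X : Type*} [TopologicalSpace X] [Group G] [TopologicalSpace G] [IsTopologicalGroup G]

/-- The shift `σ(g,φ)`, the partial map `x ↦ φ(xg)` with domain `(dom φ)g⁻¹`. -/
def shift (g : G) (φ : Cp G X) : Cp G X :=
  ⟨⟨fun x => φ.1 (x * g), φ.1.continuous.comp (continuous_mul_right g)⟩, by
    obtain ⟨g₀, hg₀⟩ := φ.2
    exact ⟨g₀ * g⁻¹, by simpa [inv_mul_cancel_right] using hg₀⟩⟩

/-- `S ⊆ C_s(G,X)` is `σ`-invariant if `σ(g,φ) ∈ S` for all `g ∈ G`, `φ ∈ S`. -/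
def SigmaInvariant (S : Set (Cs G X)) : Prop :=
  ∀ (g : G) (φ : Cs G X), φ ∈ S → ∃ ψ : Cs G X, ψ ∈ S ∧ ψ.1 = shift g φ.1

/-- `A ⊆ X` is weakly invariant with respect to `S` if every `x ∈ A` is the value at the
identity of some `φ ∈ S` with `O(φ) ⊆ A`. -/
def WeaklyInvariant (S : Set (Cs G X)) (A : Set X) : Prop :=
  ∀ x ∈ A, ∃ φ ∈ S, φ.1.1 (1 : G) = some x ∧ orbit φ ⊆ A

/-- `x` is an equilibrium of `S` if some `φ ∈ S` has `φ(e) = x` and `O(φ) = {x}`. -/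
def Equilibrium (S : Set (Cs G X)) (x : X) : Prop :=
  ∃ φ ∈ S, φ.1.1 (1 : G) = some x ∧ orbit φ = {x}

/-- The set of motions `{π(·,x) : x ∈ X} ⊆ C_s(G,X)` of a `G`-action `π`. -/
def actionSet (π : G × X → X) : Set (Cs G X) :=
  {φ : Cs G X | ∃ x : X, ∀ g : G, φ.1.1 g = some (π (g, x))}

end GroupPart

/-- An isomorphism `<H,k,η> : S*W → S'*W'` of star-constructions: the three maps are
homeomorphisms satisfying `ev ∘ H = k ∘ ev` and `p ∘ H = η ∘ p`. -/
structure StarIso {G X G' X' : Type*} [TopologicalSpace G] [TopologicalSpace X]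
    [TopologicalSpace G'] [TopologicalSpace X']
    (S : Set (Cs G X)) (W : Set (G × X)) (S' : Set (Cs G' X')) (W' : Set (G' × X')) where
  H : ↥(star S W) ≃ₜ ↥(star S' W')
  k : ↥W ≃ₜ ↥W'
  η : ↥S ≃ₜ ↥S'
  ev_comm : ∀ (q : ↥(star S W)) (x : X), q.1.2.1.1 q.1.1 = some x →
      ∀ hW : (q.1.1, x) ∈ W, ∀ x' : X', (H q).1.2.1.1 (H q).1.1 = some x' →
      ((k ⟨(q.1.1, x), hW⟩ : ↥W') : G' × X') = ((H q).1.1, x')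
  p_comm : ∀ q : ↥(star S W), (H q).1.2 = ((η ⟨q.1.2, q.2.1⟩ : ↥S') : Cs G' X')

/-- A map `k = (τ,h) : W → W'` preserves phase space if `h(g,x)` does not depend on `g`. -/
def PreservesPhase {G X G' X' : Type*} [TopologicalSpace G] [TopologicalSpace X]
    [TopologicalSpace G'] [TopologicalSpace X'] {W : Set (G × X)} {W' : Set (G' × X')}
    (k : ↥W → ↥W') : Prop :=
  ∀ w w' : ↥W, (w : G × X).2 = (w' : G × X).2 →
    ((k w : ↥W') : G' × X').2 = ((k w' : ↥W') : G' × X').2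

/-- Two continuous maps are isotopic if they are connected by a continuous family of
homeomorphisms parametrized by `[0,1]`. -/
def Isotopic {A B : Type*} [TopologicalSpace A] [TopologicalSpace B] (f₀ f₁ : A → B) : Prop :=
  ∃ F : unitInterval × A → B, Continuous F ∧ (∀ a, F (0, a) = f₀ a) ∧
    (∀ a, F (1, a) = f₁ a) ∧ ∀ s : unitInterval, IsHomeomorph fun a => F (s, a)

end Yorke

/-!
Since `G` is locally compact and second countable and `X̂` is second countable, the compact-open
topology on `C(G,X̂)` is second countable, hence so is `C_s(G,X)`; in `G × C_s(G,X)` compactness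
and sequential compactness therefore agree. For `⇒`, apply the axiom to the compact set
`W = {(g,x)} ∪ {(gₙ,xₙ)}`: a subsequence of `(gₙ,φₙ)` converges to some `(g,ψ) ∈ S*W`, and
`ψ(g) = x` because evaluation is jointly continuous and distinct points of `X` have disjoint
neighbourhoods in `X̂`. For `⇐`, the hypothesis makes every `S*W` sequentially compact.
-/

namespace Yorke

section OptionTopology

variable {X : Type*} [TopologicalSpace X]

theorem isOpenMap_some : IsOpenMap (some : X → Option X) :=
  fun u hu => isOpen_generateFrom_of_mem (Or.inr ⟨u, hu, rfl⟩)

theorem continuous_some : Continuous (some : X → Option X) := by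
  refine continuous_generateFrom_iff.2 ?_
  rintro _ (rfl | ⟨u, hu, rfl⟩)
  · exact isOpen_univ
  · rwa [preimage_image_eq u (Option.some_injective X)]

theorem isOpenEmbedding_some : IsOpenEmbedding (some : X → Option X) :=
  .of_continuous_injective_isOpenMap continuous_some (Option.some_injective X) isOpenMap_some

theorem nhds_none : 𝓝 (none : Option X) = ⊤ := by
  refine top_unique ((nhds_generateFrom).trans_ge (le_iInf₂ ?_))
  rintro _ ⟨hnone, rfl | ⟨u, -, rfl⟩⟩
  · exact principal_univ.ge
  · simp at hnone

theorem disjoint_nhds_some [T2Space X] {a b : X} (h : a ≠ b) :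
    Disjoint (𝓝 (some a)) (𝓝 (some b)) := by
  rw [← isOpenEmbedding_some.map_nhds_eq, ← isOpenEmbedding_some.map_nhds_eq,
    disjoint_map (Option.some_injective X)]
  exact disjoint_nhds_nhds.2 h

theorem isTopologicalBasis_insert_univ_image_some {B : Set (Set X)} (hB : IsTopologicalBasis B) :
    IsTopologicalBasis (insert univ (image some '' B)) := by
  refine isTopologicalBasis_of_isOpen_of_nhds ?_ fun a u ha hu => ?_
  · rintro _ (rfl | ⟨b, hb, rfl⟩)
    exacts [isOpen_univ, isOpenMap_some _ (hB.isOpen hb)]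
  · cases a with
    | none =>
      have hu : u = univ := by simpa [nhds_none] using hu.mem_nhds ha
      exact ⟨univ, mem_insert _ _, trivial, hu.ge⟩
    | some x =>
      obtain ⟨b, hb, hxb, hbu⟩ :=
        hB.exists_subset_of_mem_open (mem_preimage.2 ha) (hu.preimage continuous_some)
      exact ⟨_, mem_insert_of_mem _ ⟨b, hb, rfl⟩, mem_image_of_mem _ hxb, image_subset_iff.2 hbu⟩

instance [SecondCountableTopology X] : SecondCountableTopology (Option X) :=
  (isTopologicalBasis_insert_univ_image_some (isBasis_countableBasis X)).secondCountableTopology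
    (((countable_countableBasis X).image _).insert _)

end OptionTopology

section CompactnessAxiom

variable {G X : Type*} [TopologicalSpace G] [TopologicalSpace X]

instance [LocallyCompactSpace G] [SecondCountableTopology G] [SecondCountableTopology X] :
    SecondCountableTopology (Cp G X) :=
  secondCountableTopology_induced _ _ Subtype.val

instance [LocallyCompactSpace G] [SecondCountableTopology G] [SecondCountableTopology X] :
    SecondCountableTopology (Cs G X) :=
  secondCountableTopology_induced _ _ Subtype.val

theorem tendsto_apply_of_tendsto [LocallyCompactSpace G] {ι : Type*} {l : Filter ι}
    {φ : ι → Cs G X} {ψ : Cs G X} {g : ι → G} {g₀ : G}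
    (hφ : Tendsto φ l (𝓝 ψ)) (hg : Tendsto g l (𝓝 g₀)) :
    Tendsto (fun i => (φ i).1.1 (g i)) l (𝓝 (ψ.1.1 g₀)) :=
  (continuous_eval.tendsto (ψ.1.1, g₀)).comp
    (((continuous_subtype_val.comp continuous_subtype_val).tendsto ψ).comp hφ |>.prodMk_nhds hg)

theorem CompactnessAxiom.exists_tendsto_subseq [LocallyCompactSpace G] [T2Space G] [T2Space X]
    [FirstCountableTopology (G × Cs G X)] {S : Set (Cs G X)} (hS : CompactnessAxiom S)
    {g : ℕ → G} {x : ℕ → X} {g₀ : G} {x₀ : X} {φ : ℕ → Cs G X}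
    (hgx : Tendsto (fun n => (g n, x n)) atTop (𝓝 (g₀, x₀)))
    (hφ : ∀ n, φ n ∈ S ∧ (φ n).1.1 (g n) = some (x n)) :
    ∃ ψ : Cs G X, ψ ∈ S ∧ ψ.1.1 g₀ = some x₀ ∧ ∃ m : ℕ → ℕ, StrictMono m ∧
      Tendsto (fun i => (g (m i), φ (m i))) atTop (𝓝 (g₀, ψ)) := by
  obtain ⟨⟨g', ψ⟩, ⟨hψS, y, hψy, -⟩, m, hm, hconv⟩ :=
    (hS _ hgx.isCompact_insert_range).tendsto_subseq (x := fun n => (g n, φ n))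
      fun n => ⟨(hφ n).1, x n, (hφ n).2, .inr ⟨n, rfl⟩⟩
  have hgm : Tendsto (fun i => g (m i)) atTop (𝓝 g₀) := hgx.fst_nhds.comp hm.tendsto_atTop
  obtain rfl : g' = g₀ := tendsto_nhds_unique hconv.fst_nhds hgm
  obtain rfl : y = x₀ := by
    by_contra hne
    have hψ := tendsto_apply_of_tendsto hconv.snd_nhds hgm
    have hx : Tendsto (fun i => (φ (m i)).1.1 (g (m i))) atTop (𝓝 (some x₀)) :=
      ((continuous_some.tendsto x₀).comp (hgx.snd_nhds.comp hm.tendsto_atTop)).congr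
        fun i => ((hφ (m i)).2).symm
    rw [hψy] at hψ
    exact hψ.not_tendsto (disjoint_nhds_some hne) hx
  exact ⟨ψ, hψS, hψy, m, hm, hconv⟩

theorem compactnessAxiom_of_exists_tendsto_subseq [FirstCountableTopology (G × X)]
    [HereditarilyLindelofSpace (G × Cs G X)] {S : Set (Cs G X)}
    (h : ∀ (g : ℕ → G) (x : ℕ → X) (g₀ : G) (x₀ : X) (φ : ℕ → Cs G X),
      Tendsto (fun n => (g n, x n)) atTop (𝓝 (g₀, x₀)) →
      (∀ n : ℕ, φ n ∈ S ∧ (φ n).1.1 (g n) = some (x n)) →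
      ∃ ψ : Cs G X, ψ ∈ S ∧ ψ.1.1 g₀ = some x₀ ∧ ∃ m : ℕ → ℕ, StrictMono m ∧
        Tendsto (fun i => (g (m i), φ (m i))) atTop (𝓝 (g₀, ψ))) :
    CompactnessAxiom S := by
  intro W hW
  refine IsSeqCompact.isCountablyCompact (fun q hq => ?_) |>.isCompact
  choose x hx hxW using fun n => (hq n).2
  obtain ⟨⟨g₀, x₀⟩, hp₀, m₁, hm₁, hconv₁⟩ := hW.tendsto_subseq (x := fun n => ((q n).1, x n)) hxW
  obtain ⟨ψ, hψS, hψ, m₂, hm₂, hconv₂⟩ :=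
    h _ _ g₀ x₀ _ hconv₁ fun i => ⟨(hq (m₁ i)).1, hx (m₁ i)⟩
  exact ⟨(g₀, ψ), ⟨hψS, x₀, hψ, hp₀⟩, m₁ ∘ m₂, hm₁.comp hm₂, hconv₂⟩

end CompactnessAxiom

end Yorke

namespace Yorke

variable {G X : Type*} [Group G] [TopologicalSpace G] [IsTopologicalGroup G]
  [LocallyCompactSpace G] [SecondCountableTopology G] [T2Space G]
  [MetricSpace X] [SecondCountableTopology X]

/-- The compactness axiom is equivalent to a Kamke-type convergence property. -/
theorem statement_4 (S : Set (Cs G X)) :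
    CompactnessAxiom S ↔
      ∀ (g : ℕ → G) (x : ℕ → X) (g₀ : G) (x₀ : X) (φ : ℕ → Cs G X),
        Tendsto (fun n => (g n, x n)) atTop (𝓝 (g₀, x₀)) →
        (∀ n : ℕ, φ n ∈ S ∧ (φ n).1.1 (g n) = some (x n)) →
        ∃ ψ : Cs G X, ψ ∈ S ∧ ψ.1.1 g₀ = some x₀ ∧
          ∃ m : ℕ → ℕ, StrictMono m ∧
            Tendsto (fun i => (g (m i), φ (m i))) atTop (𝓝 (g₀, ψ)) :=
  ⟨fun hS _ _ _ _ _ => hS.exists_tendsto_subseq, compactnessAxiom_of_exists_tendsto_subseq⟩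

end Yorke
end

section
/- Let S be a σ-invariant subset of C_s(G,X) satisfying the compactness axiom and let X be locally compact. If A ⊆ X is relatively compact and weakly invariant with respect to S, then its closure Ā is also weakly invariant with respect to S. -/
open Set Filter Topology TopologicalSpace

/-
For `x ∈ closure A`, let the points `a ∈ A` tend to `x` and take motions `φ_a ∈ S` through them
with orbits in `A`. The pairs `(e, φ_a)` lie in `S*({e} × closure A)`, which is compact by the
compactness axiom, so the `φ_a` cluster at some `ψ ∈ S` defined at `e`. Evaluation at a fixed
time is continuous for the compact-open topology, so each value `ψ(g)` is a cluster point of the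
values `φ_a(g) ∈ A ∪ {ω}`. As `X` sits openly in `X̂`, an `X`-valued such cluster point lies
in `closure A`, and likewise `ψ(e)` is a cluster point of the `a`, i.e. `ψ(e) = x`.
-/

namespace Yorke

section HatTopology

variable {X : Type*} [TopologicalSpace X]

lemma isOpen_image_some {u : Set X} (hu : IsOpen u) : IsOpen ((some : X → Option X) '' u) :=
  TopologicalSpace.GenerateOpen.basic _ (Or.inr ⟨u, hu, rfl⟩)

lemma mem_closure_preimage_some {T : Set (Option X)} {y : X} (hy : some y ∈ closure T) :
    y ∈ closure (some ⁻¹' T) := by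
  refine mem_closure_iff.mpr fun o ho hyo => ?_
  obtain ⟨_, ⟨z, hzo, rfl⟩, hzT⟩ :=
    mem_closure_iff.mp hy _ (isOpen_image_some ho) (mem_image_of_mem _ hyo)
  exact ⟨z, hzo, hzT⟩

lemma clusterPt_comap_some {l : Filter (Option X)} {y : X} (h : ClusterPt (some y) l) :
    ClusterPt y (comap some l) := by
  refine clusterPt_iff_forall_mem_closure.mpr fun s hs => ?_
  obtain ⟨t, ht, hts⟩ := mem_comap.mp hs
  exact closure_mono hts (mem_closure_preimage_some (h.mem_closure_of_mem t ht))

end HatTopology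

section ClusterPoints

variable {G X ι : Type*} [TopologicalSpace G] [TopologicalSpace X]
  {F : Filter ι} {Φ : ι → Cs G X} {ψ : Cs G X}

lemma continuous_eval_const_Cs (g : G) : Continuous fun φ : Cs G X => φ.1.1 g :=
  (continuous_eval_const g).comp (continuous_subtype_val.comp continuous_subtype_val)

lemma clusterPt_map_eval (h : ClusterPt ψ (map Φ F)) (g : G) :
    ClusterPt (ψ.1.1 g) (map (fun i => (Φ i).1.1 g) F) :=
  h.map (continuous_eval_const_Cs g).continuousAt (tendsto_map' tendsto_map)

lemma orbit_subset_closure_of_clusterPt_map {A : Set X} (h : ClusterPt ψ (map Φ F))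
    (hΦ : ∀ i, orbit (Φ i) ⊆ A) : orbit ψ ⊆ closure A := by
  rintro y ⟨g, hg⟩
  have hy : ClusterPt y (comap some (map (fun i => (Φ i).1.1 g) F)) :=
    clusterPt_comap_some (hg ▸ clusterPt_map_eval h g)
  have hvalues : {t : Option X | ∀ z, t = some z → z ∈ A} ∈ map (fun i => (Φ i).1.1 g) F :=
    mem_map.mpr (univ_mem' fun i z hz => hΦ i ⟨g, hz⟩)
  exact hy.mem_closure_of_mem A (mem_comap.mpr ⟨_, hvalues, fun z hz => hz z rfl⟩)

lemma eq_of_clusterPt_map_of_tendsto [T2Space X] {u : ι → X} {g : G} {x x' : X}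
    (h : ClusterPt ψ (map Φ F)) (hΦ : ∀ i, (Φ i).1.1 g = some (u i)) (hu : Tendsto u F (𝓝 x))
    (hψ : ψ.1.1 g = some x') : x' = x := by
  have hx' : ClusterPt x' (map u F) := by
    have := clusterPt_comap_some (hψ ▸ clusterPt_map_eval h g)
    rwa [funext hΦ, ← Function.comp_def, ← map_map, comap_map (Option.some_injective X)] at this
  exact eq_of_nhds_neBot (hx'.mono hu)

end ClusterPoints

variable {G X : Type*} [Group G] [TopologicalSpace G] [IsTopologicalGroup G]
  [LocallyCompactSpace G] [SecondCountableTopology G] [T2Space G]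
  [MetricSpace X] [SecondCountableTopology X]

theorem statement_12_general (S : Set (Cs G X)) (hcomp : CompactnessAxiom S) (A : Set X)
    (hA : IsCompact (closure A)) (hinv : WeaklyInvariant S A) : WeaklyInvariant S (closure A) := by
  intro x hx
  choose Φ hΦS hΦe hΦA using fun a : A => hinv a a.2
  have : (comap ((↑) : A → X) (𝓝 x)).NeBot := mem_closure_iff_comap_neBot.mp hx
  set K := Prod.snd '' star S (({1} : Set G) ×ˢ closure A)
  have hK : IsCompact K := (hcomp _ (isCompact_singleton.prod hA)).image continuous_snd
  have hΦK : ∀ a : A, Φ a ∈ K :=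
    fun a => ⟨(1, Φ a), ⟨hΦS a, a, hΦe a, rfl, subset_closure a.2⟩, rfl⟩
  obtain ⟨_, ⟨⟨g, ψ⟩, ⟨hψS, x', hψx', hg, -⟩, rfl⟩, hψ⟩ :=
    hK.exists_clusterPt (f := map Φ (comap (↑) (𝓝 x)))
      (le_principal_iff.mpr (mem_map.mpr (univ_mem' hΦK)))
  obtain rfl : g = 1 := hg
  refine ⟨ψ, hψS, ?_, orbit_subset_closure_of_clusterPt_map hψ hΦA⟩
  rw [hψx', eq_of_clusterPt_map_of_tendsto hψ hΦe tendsto_comap hψx']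

/-- For a `σ`-invariant `S` satisfying the compactness axiom on a locally compact `X`, the
closure of a relatively compact weakly invariant set is weakly invariant. -/
theorem statement_12 [LocallyCompactSpace X] (S : Set (Cs G X)) (hσ : SigmaInvariant S)
    (hcomp : CompactnessAxiom S) (A : Set X) (hA : IsCompact (closure A))
    (hinv : WeaklyInvariant S A) : WeaklyInvariant S (closure A) :=
  statement_12_general S hcomp A hA hinv

end Yorke
end
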